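/- arXiv:1309.0553 — 4 statements merged into one kernel-verified Lean document; each statement's English description precedes it below -/
import Mathlib

section
/- For every k ≥ 2 and n ≥ 1, there exists a (k,n)-de Bruijn sequence, i.e., a function w : ZMod (k^n) → Fin k such that the map sending i to the n-tuple (w(i), w(i+1), ..., w(i+n-1)) is a bijection from ZMod (k^n) to (Fin n → Fin k). -/
/-!
Words of length `n = m + 1` are the vertices of the de Bruijn graph, with an edge `u → v` when
the last `m` letters of `u` are the first `m` letters of `v`; a de Bruijn sequence is read off,
as first letters, along a permutation `σ` of the words that moves along edges and has a single
cycle. Among such permutations (rotation of words is one) take one whose cycle through a fixed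
word `c` is largest. If a word `x` on that cycle and a word `y` off it differ only in the first
letter, then `σ * swap x y` still moves along edges and joins the two cycles, contradicting
maximality. So the cycle of `c` is closed under changing the first letter; since `σ` maps the
`k` words `a :: tail u` injectively to successors of `u`, it then contains every successor of
each of its words, and every word is reached from `c` by `n` edges.
-/

open Equiv Function

namespace Equiv.Perm

variable {β : Type*} {σ : Perm β}

section MulSwap

variable [Finite β] [DecidableEq β] {x y : β}

theorem sameCycle_mul_swap_of_not_sameCycle (h : ¬σ.SameCycle x y) :
    (σ * swap x y).SameCycle y x := by
  -- From `(σ * swap x y) y = σ x` on, `σ * swap x y` agrees with `σ` along the `σ`-orbit of `x`,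
  -- which avoids `y`, until that orbit returns to `x`.
  have walk : ∀ j : ℕ, (σ * swap x y).SameCycle y x ∨
      (σ * swap x y).SameCycle y ((σ ^ (j + 1)) x) := by
    intro j
    induction j with
    | zero => exact .inr ⟨1, by simp⟩
    | succ j ih =>
      refine ih.elim .inl fun hj => ?_
      by_cases hx : (σ ^ (j + 1)) x = x
      · rw [hx] at hj
        exact .inl hj
      have hy : (σ ^ (j + 1)) x ≠ y := fun hy => h (hy ▸ sameCycle_pow_right.mpr .rfl)
      refine .inr (sameCycle_apply_right.mpr hj |>.trans (Eq.sameCycle ?_ _))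
      rw [mul_apply, swap_apply_of_ne_of_ne hx hy, pow_succ' σ (j + 1), mul_apply]
  obtain ⟨p, hp⟩ : ∃ p, orderOf σ = p + 1 := Nat.exists_eq_succ_of_ne_zero (orderOf_pos σ).ne'
  simpa [← hp, pow_orderOf_eq_one] using walk p

theorem sameCycle_mul_swap_apply (h : ¬σ.SameCycle x y) (a : β) :
    (σ * swap x y).SameCycle a (σ a) := by
  have hyx := sameCycle_mul_swap_of_not_sameCycle h
  by_cases hax : a = x
  · subst hax
    simpa using (sameCycle_apply_right.mpr hyx.symm)
  by_cases hay : a = y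
  · subst hay
    simpa using (sameCycle_apply_right.mpr hyx)
  · exact ⟨1, by simp [swap_apply_of_ne_of_ne hax hay]⟩

theorem SameCycle.mul_swap (h : ¬σ.SameCycle x y) {a b : β} (hab : σ.SameCycle a b) :
    (σ * swap x y).SameCycle a b := by
  obtain ⟨i, rfl⟩ := hab.exists_nat_pow_eq
  clear hab
  induction i with
  | zero => exact .refl _ _
  | succ i ih =>
    rw [pow_succ', mul_apply]
    exact ih.trans (sameCycle_mul_swap_apply h _)

end MulSwap

section SingleCycle

variable [Fintype β] {c : β}

theorem minimalPeriod_eq_card_of_forall_sameCycle (h : ∀ z, σ.SameCycle c z) :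
    minimalPeriod σ c = Fintype.card β := by
  classical
  have hmem : ∀ z, z ∈ MulAction.orbit (Subgroup.zpowers σ) c := fun z =>
    let ⟨i, hi⟩ := h z
    ⟨⟨σ ^ i, Subgroup.zpow_mem_zpowers σ i⟩, hi⟩
  rw [← Fintype.card_congr (Equiv.subtypeUnivEquiv hmem), ← MulAction.minimalPeriod_eq_card]
  rfl

theorem pow_mod_apply_of_forall_sameCycle (h : ∀ z, σ.SameCycle c z) {N : ℕ}
    (hN : Fintype.card β = N) (a : ℕ) : (σ ^ (a % N)) c = (σ ^ a) c := by
  rw [← hN, ← minimalPeriod_eq_card_of_forall_sameCycle h, ← iterate_eq_pow, ← iterate_eq_pow,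
    iterate_mod_minimalPeriod_eq]

theorem bijective_pow_val_apply_of_forall_sameCycle (h : ∀ z, σ.SameCycle c z) {N : ℕ}
    [NeZero N] (hN : Fintype.card β = N) : Bijective fun i : ZMod N => (σ ^ i.val) c := by
  refine (Fintype.bijective_iff_surjective_and_card _).mpr ⟨fun z => ?_, by simp [hN]⟩
  obtain ⟨i, rfl⟩ := (h z).exists_nat_pow_eq
  exact ⟨i, by simp only [ZMod.val_natCast, pow_mod_apply_of_forall_sameCycle h hN]⟩

end SingleCycle

end Equiv.Perm

namespace DeBruijn

variable {α : Type*} {m : ℕ}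

def Adj (u v : Fin (m + 1) → α) : Prop :=
  Fin.tail u = Fin.init v

def IsCycleCover (σ : Perm (Fin (m + 1) → α)) : Prop :=
  ∀ u, Adj u (σ u)

theorem Adj.eq_of_apply_last_eq {u v v' : Fin (m + 1) → α} (hv : Adj u v) (hv' : Adj u v')
    (hlast : v (Fin.last m) = v' (Fin.last m)) : v = v' := by
  rw [← Fin.snoc_init_self v, ← Fin.snoc_init_self v', ← hv, ← hv', hlast]

theorem reflTransGen_adj (u z : Fin (m + 1) → α) : Relation.ReflTransGen Adj u z := by
  let s := Fin.append u z
  have window : ∀ j (hj : j ≤ m + 1),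
      Relation.ReflTransGen Adj u fun i : Fin (m + 1) => s ⟨j + i, by omega⟩ := by
    intro j
    induction j with
    | zero =>
      intro _
      convert Relation.ReflTransGen.refl
      simp only [s, zero_add]
      exact Fin.append_left u z _
    | succ j ih =>
      intro hj
      refine (ih (by omega)).tail ?_
      funext i
      exact congrArg s (Fin.ext (by simp only [Fin.val_succ, Fin.val_castSucc]; omega))
  convert window (m + 1) le_rfl
  exact (Fin.append_right u z _).symm

theorem isCycleCover_rotate :
    IsCycleCover ((finRotate (m + 1)).symm.arrowCongr (Equiv.refl α)) := by
  intro u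
  funext i
  simp [Fin.tail, Fin.init, Fin.coeSucc_eq_succ]

namespace IsCycleCover

variable {σ : Perm (Fin (m + 1) → α)}

theorem apply_castSucc (hσ : IsCycleCover σ) (u : Fin (m + 1) → α) (i : Fin m) :
    σ u i.castSucc = u i.succ :=
  (congrFun (hσ u) i).symm

theorem pow_apply (hσ : IsCycleCover σ) (u : Fin (m + 1) → α) (j : ℕ) (i : Fin (m + 1))
    (h : i + j < m + 1) : (σ ^ j) u i = u ⟨i + j, h⟩ := by
  induction j generalizing u with
  | zero => rfl
  | succ j ih =>
    rw [pow_succ, Perm.mul_apply, ih _ (by omega)]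
    exact hσ.apply_castSucc u ⟨i + j, by omega⟩

theorem pow_apply_zero (hσ : IsCycleCover σ) (u : Fin (m + 1) → α) (t : Fin (m + 1)) :
    (σ ^ (t : ℕ)) u 0 = u t := by
  simpa using hσ.pow_apply u t 0 (by simp; omega)

theorem mul_swap [DecidableEq α] (hσ : IsCycleCover σ) {x y : Fin (m + 1) → α}
    (hxy : Fin.tail x = Fin.tail y) : IsCycleCover (σ * swap x y) := by
  intro u
  have : Fin.tail (swap x y u) = Fin.tail u := by
    rw [swap_apply_def]
    split_ifs with hx hy
    exacts [hx ▸ hxy.symm, hy ▸ hxy, rfl]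
  rw [Perm.mul_apply, Adj, ← this]
  exact hσ _

theorem exists_apply_cons_eq [Finite α] (hσ : IsCycleCover σ) {u v : Fin (m + 1) → α}
    (huv : Adj u v) : ∃ a, σ (Fin.cons a (Fin.tail u)) = v := by
  -- The successors of `u` are told apart by their last letter, so counting letters suffices.
  have hadj : ∀ a, Adj u (σ (Fin.cons a (Fin.tail u))) := fun a => by
    simpa [Adj] using hσ (Fin.cons a (Fin.tail u))
  have hinj : Injective fun a => σ (Fin.cons a (Fin.tail u)) (Fin.last m) := fun a b hab =>
    Fin.cons_left_injective _ (σ.injective ((hadj a).eq_of_apply_last_eq (hadj b) hab))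
  obtain ⟨a, ha⟩ := Finite.injective_iff_surjective.mp hinj (v (Fin.last m))
  exact ⟨a, (hadj a).eq_of_apply_last_eq huv ha⟩

theorem forall_mem_of_closed [Finite α] (hσ : IsCycleCover σ) {S : Set (Fin (m + 1) → α)}
    (hσS : ∀ x ∈ S, σ x ∈ S) (htail : ∀ x ∈ S, ∀ y, Fin.tail x = Fin.tail y → y ∈ S)
    {c : Fin (m + 1) → α} (hc : c ∈ S) (z : Fin (m + 1) → α) : z ∈ S := by
  induction reflTransGen_adj c z with
  | refl => exact hc
  | tail _ huv hu =>
    obtain ⟨a, rfl⟩ := hσ.exists_apply_cons_eq huv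
    exact hσS _ (htail _ hu _ (by rw [Fin.tail_cons]))

end IsCycleCover

theorem exists_isCycleCover_forall_sameCycle [Finite α] (c : Fin (m + 1) → α) :
    ∃ σ : Perm (Fin (m + 1) → α), IsCycleCover σ ∧ ∀ z, σ.SameCycle c z := by
  classical
  obtain ⟨σ, hσ, hmax⟩ := Set.exists_max_image {σ | IsCycleCover σ}
    (fun σ : Perm (Fin (m + 1) → α) => {z | σ.SameCycle c z}.ncard) (Set.toFinite _)
    ⟨_, isCycleCover_rotate⟩
  refine ⟨σ, hσ, hσ.forall_mem_of_closed (S := {z | σ.SameCycle c z})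
    (fun x hx => Perm.sameCycle_apply_right.mpr hx) ?_ (.refl _ _)⟩
  intro x hx y hxy
  by_contra hy
  have hxy' : ¬σ.SameCycle x y := fun h => hy (hx.trans h)
  have hlt : {z | σ.SameCycle c z}.ncard < {z | (σ * swap x y).SameCycle c z}.ncard := by
    refine Set.ncard_lt_ncard ⟨fun z hz => hz.mul_swap hxy', fun hsub => hy (hsub ?_)⟩
    exact (hx.mul_swap hxy').trans (Perm.sameCycle_mul_swap_of_not_sameCycle hxy').symm
  exact (hmax _ (hσ.mul_swap hxy)).not_gt hlt

end DeBruijn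

theorem stmt_1 (k n : ℕ) (hk : 2 ≤ k) (hn : 1 ≤ n) :
    ∃ w : ZMod (k ^ n) → Fin k,
      Function.Bijective (fun (i : ZMod (k ^ n)) (t : Fin n) => w (i + (t : ℕ))) := by
  obtain ⟨m, rfl⟩ : ∃ m, n = m + 1 := ⟨n - 1, by omega⟩
  have c : Fin (m + 1) → Fin k := fun _ => ⟨0, by omega⟩
  obtain ⟨σ, hσ, hc⟩ := DeBruijn.exists_isCycleCover_forall_sameCycle c
  have hN : Fintype.card (Fin (m + 1) → Fin k) = k ^ (m + 1) := by simp
  have : NeZero (k ^ (m + 1)) := ⟨pow_ne_zero _ (by omega)⟩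
  refine ⟨fun i => (σ ^ i.val) c 0, ?_⟩
  convert Perm.bijective_pow_val_apply_of_forall_sameCycle hc hN using 1
  funext i t
  dsimp only
  rw [ZMod.val_add, ZMod.val_natCast, Nat.add_mod_mod,
    Perm.pow_mod_apply_of_forall_sameCycle hc hN, add_comm i.val, pow_add, Perm.mul_apply,
    hσ.pow_apply_zero]
end

section
/- For every k ≥ 2, there exists a k-de Bruijn L-array: a function A : ZMod k × ZMod (k^2) → ZMod k such that the map sending (i,j) to the triple (A(i,j), A(i+1,j), A(i+1,j+1)) is a bijection from ZMod k × ZMod (k^2) onto (ZMod k)^3. -/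
theorem stmt_5 (k : ℕ) (hk : 2 ≤ k) :
    ∃ A : ZMod k × ZMod (k ^ 2) → ZMod k,
      Function.Bijective (fun (p : ZMod k × ZMod (k ^ 2)) =>
        (A p, A (p.1 + 1, p.2), A (p.1 + 1, p.2 + 1))) := by
  haveI : NeZero k := ⟨by omega⟩
  haveI : NeZero (k ^ 2) := ⟨by positivity⟩
  set a : ZMod (k ^ 2) → ZMod k := fun j => ((j.val : ℕ) : ZMod k) with ha_def
  set b : ZMod (k ^ 2) → ZMod k := fun j => ((j.val / k : ℕ) : ZMod k) with hb_def
  have hk2 : 1 < k ^ 2 := by nlinarith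
  have key : ∀ x : ℕ, ((x % k ^ 2 : ℕ) : ZMod k) = (x : ZMod k) := by
    intro x
    have h1 : x % k ^ 2 % k = x % k := Nat.mod_mod_of_dvd x ⟨k, (sq k)⟩
    calc ((x % k ^ 2 : ℕ) : ZMod k) = ((x % k ^ 2 % k : ℕ) : ZMod k) :=
          (ZMod.natCast_mod _ k).symm
      _ = ((x % k : ℕ) : ZMod k) := by rw [h1]
      _ = (x : ZMod k) := ZMod.natCast_mod x k
  haveI : Fact (1 < k ^ 2) := ⟨hk2⟩
  have hval1 : ∀ j : ZMod (k ^ 2), (j + 1).val = (j.val + 1) % k ^ 2 := by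
    intro j
    rw [ZMod.val_add, ZMod.val_one _]
  have ha : ∀ j : ZMod (k ^ 2), a (j + 1) = a j + 1 := by
    intro j
    simp only [ha_def, hval1 j, key]
    push_cast
    ring
  have hbval : ∀ j : ZMod (k ^ 2), b (j + 1) = (((j.val + 1) / k : ℕ) : ZMod k) := by
    intro j
    simp only [hb_def, hval1 j]
    rcases lt_or_ge (j.val + 1) (k ^ 2) with h | h
    · rw [Nat.mod_eq_of_lt h]
    · have hjlt : j.val < k ^ 2 := ZMod.val_lt j
      have he : j.val + 1 = k ^ 2 := by omega
      have hq : k ^ 2 / k = k := by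
        rw [sq, Nat.mul_div_cancel_left _ (by omega : 0 < k)]
      rw [he, Nat.mod_self, hq]
      simp
  have hb : ∀ j : ZMod (k ^ 2),
      b (j + 1) = b j + (if k ∣ j.val + 1 then 1 else 0) := by
    intro j
    rw [hbval j, Nat.succ_div]
    push_cast
    ring
  have hcond : ∀ j : ZMod (k ^ 2), (k ∣ j.val + 1) ↔ a j + 1 = 0 := by
    intro j
    rw [ha_def]
    simp only
    rw [show ((j.val : ℕ) : ZMod k) + 1 = ((j.val + 1 : ℕ) : ZMod k) by push_cast; ring]
    exact (ZMod.natCast_eq_zero_iff _ _).symm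
  refine ⟨fun p => p.1 * a p.2 + b p.2, ?_⟩
  rw [Fintype.bijective_iff_injective_and_card]
  constructor
  · rintro ⟨i, j⟩ ⟨i', j'⟩ h
    simp only [Prod.mk.injEq] at h
    obtain ⟨h1, h2, h3⟩ := h
    have haa : a j = a j' := by linear_combination h2 - h1
    have hd : (if k ∣ j.val + 1 then (1 : ZMod k) else 0)
        = (if k ∣ j'.val + 1 then (1 : ZMod k) else 0) := by
      simp only [hcond, haa]
    rw [ha j, ha j', hb j, hb j', haa, hd] at h3
    rw [haa] at h1 h2
    have hii : i = i' := by linear_combination h3 - h2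
    rw [hii] at h1
    have hbb : b j = b j' := by linear_combination h1
    -- recover j = j'
    have hja : j.val % k = j'.val % k := by
      have := congrArg ZMod.val haa
      simp only [ha_def, ZMod.val_natCast] at this
      exact this
    have hjlt : j.val < k * k := (ZMod.val_lt j).trans_eq (pow_two k)
    have hjlt' : j'.val < k * k := (ZMod.val_lt j').trans_eq (pow_two k)
    have hdiv : j.val / k < k := Nat.div_lt_of_lt_mul hjlt
    have hdiv' : j'.val / k < k := Nat.div_lt_of_lt_mul hjlt'
    have hjb : j.val / k = j'.val / k := by
      have := congrArg ZMod.val hbb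
      simp only [hb_def, ZMod.val_natCast] at this
      rwa [Nat.mod_eq_of_lt hdiv, Nat.mod_eq_of_lt hdiv'] at this
    have : j.val = j'.val := by
      rw [← Nat.div_add_mod j.val k, ← Nat.div_add_mod j'.val k, hja, hjb]
    have hjj : j = j' := ZMod.val_injective _ this
    rw [hii, hjj]
  · simp only [Fintype.card_prod, ZMod.card]
    ring
end

section
/- Fix k ≥ 2. Define A : ZMod k × ZMod (k^2) → ZMod k by writing each column index j ∈ {0,...,k²-1} uniquely as j = s·k + c with 0 ≤ s, c ≤ k-1, and setting A(r, j) = (s + r·c) mod k. Then A is a k-de Bruijn L-array: the map (r,j) ↦ (A(r,j), A(r+1,j), A(r+1,j+1)) is a bijection from ZMod k × ZMod (k^2) onto (ZMod k)^3. -/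
/-- The modular array: entry in row `r` and column `j = s*k + c` (square `s`,
column-within-square `c`) is `(s + r*c) mod k`. -/
def LArray (k : ℕ) (r : ZMod k) (j : ZMod (k ^ 2)) : ZMod k :=
  ((j.val / k : ℕ) : ZMod k) + r * ((j.val % k : ℕ) : ZMod k)

lemma LArray_succ (k : ℕ) (hk : 2 ≤ k) (r : ZMod k) (j : ZMod (k ^ 2)) :
    LArray k r (j + 1) =
      if j.val % k = k - 1 then ((j.val / k : ℕ) : ZMod k) + 1
      else ((j.val / k : ℕ) : ZMod k) + r * (((j.val % k : ℕ) : ZMod k) + 1) := by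
  haveI : NeZero (k ^ 2) := ⟨by positivity⟩
  haveI : Fact (1 < k ^ 2) := ⟨by nlinarith⟩
  have hkk : k ^ 2 = k * k := sq k
  have hval : (j + 1).val = (j.val + 1) % k ^ 2 := by
    rw [ZMod.val_add, ZMod.val_one]
  have hjlt : j.val < k ^ 2 := ZMod.val_lt j
  have hmod : j.val % k < k := Nat.mod_lt _ (by omega)
  have hdm : k * (j.val / k) + j.val % k = j.val := Nat.div_add_mod _ _
  have hdlt : j.val / k < k := Nat.div_lt_of_lt_mul (by omega)
  split_ifs with hc
  · by_cases hs : j.val / k = k - 1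
    · have hval0 : (j + 1).val = 0 := by
        have h1 : k * (j.val / k + 1) = k * k := by rw [hs]; congr 1; omega
        have hdist : k * (j.val / k + 1) = k * (j.val / k) + k := by ring
        have h2 : j.val + 1 = k ^ 2 := by omega
        rw [hval, h2, Nat.mod_self]
      unfold LArray
      rw [hval0]
      simp only [Nat.zero_div, Nat.zero_mod, Nat.cast_zero, mul_zero, add_zero, hs]
      have : ((k - 1 : ℕ) : ZMod k) = (k : ZMod k) - 1 := by
        push_cast [Nat.cast_sub (by omega : 1 ≤ k)]; ring
      rw [this, ZMod.natCast_self]; ring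
    · have hle : k * (j.val / k + 1) ≤ k * (k - 1) :=
        Nat.mul_le_mul_left _ (by omega)
      have hkk1 : k * (k - 1) + k = k * k := by
        have : k - 1 + 1 = k := by omega
        calc k * (k - 1) + k = k * (k - 1 + 1) := by ring
        _ = k * k := by rw [this]
      have hdist : k * (j.val / k + 1) = k * (j.val / k) + k := by ring
      have hval1 : (j + 1).val = k * (j.val / k + 1) := by
        rw [hval, Nat.mod_eq_of_lt (by omega)]; omega
      unfold LArray
      rw [hval1, Nat.mul_mod_right, Nat.mul_div_cancel_left _ (by omega : 0 < k)]
      simp only [Nat.cast_zero, mul_zero, add_zero]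
      push_cast; ring
  · have hval1 : (j + 1).val = j.val + 1 := by
      have hle : k * (j.val / k) ≤ k * (k - 1) :=
        Nat.mul_le_mul_left _ (by omega)
      have hkk1 : k * (k - 1) + k = k * k := by
        have : k - 1 + 1 = k := by omega
        calc k * (k - 1) + k = k * (k - 1 + 1) := by ring
        _ = k * k := by rw [this]
      rw [hval, Nat.mod_eq_of_lt (by omega)]
    have hmodeq : (j.val + 1) % k = j.val % k + 1 := by
      rw [show j.val + 1 = j.val % k + 1 + k * (j.val / k) from by omega,
        Nat.add_mul_mod_self_left, Nat.mod_eq_of_lt (by omega)]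
    have hdiveq : (j.val + 1) / k = j.val / k := by
      rw [show j.val + 1 = j.val % k + 1 + k * (j.val / k) from by omega,
        Nat.add_mul_div_left _ _ (by omega : 0 < k),
        Nat.div_eq_of_lt (by omega), Nat.zero_add]
    unfold LArray
    rw [hval1, hmodeq, hdiveq]
    push_cast; ring

theorem stmt_6 (k : ℕ) (hk : 2 ≤ k) :
    Function.Bijective (fun (p : ZMod k × ZMod (k ^ 2)) =>
      (LArray k p.1 p.2, LArray k (p.1 + 1) p.2, LArray k (p.1 + 1) (p.2 + 1))) := by
  haveI : NeZero k := ⟨by omega⟩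
  haveI : NeZero (k ^ 2) := ⟨by positivity⟩
  rw [Fintype.bijective_iff_injective_and_card]
  constructor
  · rintro ⟨r, j⟩ ⟨r', j'⟩ h
    simp only [Prod.mk.injEq] at h
    obtain ⟨h1, h2, h3⟩ := h
    rw [LArray_succ k hk, LArray_succ k hk] at h3
    unfold LArray at h1 h2
    have hkk : k ^ 2 = k * k := sq k
    have hclt : j.val % k < k := Nat.mod_lt _ (by omega)
    have hc'lt : j'.val % k < k := Nat.mod_lt _ (by omega)
    have hcc : ((j.val % k : ℕ) : ZMod k) = ((j'.val % k : ℕ) : ZMod k) := by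
      linear_combination h2 - h1
    have hcc' : j.val % k = j'.val % k := by
      have := congrArg ZMod.val hcc
      rwa [ZMod.val_natCast_of_lt hclt, ZMod.val_natCast_of_lt hc'lt] at this
    rw [← hcc'] at h3
    have hmain : ((j.val / k : ℕ) : ZMod k) = ((j'.val / k : ℕ) : ZMod k) ∧ r = r' := by
      split_ifs at h3 with hck
      · have hcast : ((j.val % k : ℕ) : ZMod k) = -1 := by
          rw [hck]
          have : ((k - 1 : ℕ) : ZMod k) = (k : ZMod k) - 1 := by
            push_cast [Nat.cast_sub (by omega : 1 ≤ k)]; ring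
          rw [this, ZMod.natCast_self]; ring
        have hss : ((j.val / k : ℕ) : ZMod k) = ((j'.val / k : ℕ) : ZMod k) := by
          linear_combination h3
        rw [hcast, ← hcc', hcast] at h1
        exact ⟨hss, by linear_combination hss - h1⟩
      · have hrr : r = r' := by
          rw [← hcc'] at h1
          linear_combination h3 - h1
        refine ⟨?_, hrr⟩
        rw [← hcc', ← hrr] at h1
        linear_combination h1
    have hdlt : j.val / k < k := Nat.div_lt_of_lt_mul (by have := ZMod.val_lt j; omega)
    have hd'lt : j'.val / k < k := Nat.div_lt_of_lt_mul (by have := ZMod.val_lt j'; omega)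
    have hss' : j.val / k = j'.val / k := by
      have := congrArg ZMod.val hmain.1
      rwa [ZMod.val_natCast_of_lt hdlt, ZMod.val_natCast_of_lt hd'lt] at this
    have hdm : k * (j.val / k) + j.val % k = j.val := Nat.div_add_mod _ _
    have hdm' : k * (j'.val / k) + j'.val % k = j'.val := Nat.div_add_mod _ _
    have hmul : k * (j.val / k) = k * (j'.val / k) := by rw [hss']
    have hjj : j = j' := by
      have hv : j.val = j'.val := by omega
      exact ZMod.val_injective _ hv
    simp [Prod.ext_iff, hmain.2, hjj]
  · simp only [Fintype.card_prod, ZMod.card]; ring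
end

section
/- Up to translation on ZMod 2 × ZMod 4, there are exactly two 2-de Bruijn L-arrays; representatives are ![![0,0,1,0],![0,1,1,1]] and ![![0,0,1,1],![0,1,1,0]]. -/
/-- `A` is a 2-de Bruijn L-array. -/
def IsL2 (A : ZMod 2 × ZMod 4 → ZMod 2) : Prop :=
  Function.Bijective (fun (p : ZMod 2 × ZMod 4) =>
    (A p, A (p.1 + 1, p.2), A (p.1 + 1, p.2 + 1)))

/-- `B` is a translate of `A` on the torus `ZMod 2 × ZMod 4`. -/
def TransEquiv (A B : ZMod 2 × ZMod 4 → ZMod 2) : Prop :=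
  ∃ (a : ZMod 2) (b : ZMod 4), ∀ i j, B (i, j) = A (i + a, j + b)

def Rep1 : ZMod 2 × ZMod 4 → ZMod 2 := fun p => ![![0, 0, 1, 0], ![0, 1, 1, 1]] p.1 p.2

def Rep2 : ZMod 2 × ZMod 4 → ZMod 2 := fun p => ![![0, 0, 1, 1], ![0, 1, 1, 0]] p.1 p.2

instance (A : ZMod 2 × ZMod 4 → ZMod 2) : Decidable (IsL2 A) := by
  unfold IsL2; infer_instance

instance (A B : ZMod 2 × ZMod 4 → ZMod 2) : Decidable (TransEquiv A B) := by
  unfold TransEquiv; infer_instance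

set_option maxRecDepth 100000 in
/-- Up to translation of the torus there are exactly two 2-de Bruijn L-arrays,
with representatives `Rep1` and `Rep2`. -/
theorem stmt_18 :
    IsL2 Rep1 ∧ IsL2 Rep2 ∧ ¬ TransEquiv Rep1 Rep2 ∧
      ∀ A, IsL2 A → TransEquiv Rep1 A ∨ TransEquiv Rep2 A := by decide
end
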